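/- Let t be a linear thin λ-term with ports, and let r be a redex of t with abstraction node m (labeled λx) binding the variable node n (the unique occurrence of x bound by m). Then n is the greatest non-port node of the subtree of t rooted at m with respect to the pre-order: every non-port node of that subtree other than n precedes n in the depth-first left-to-right traversal. -/
import Mathlib


/-- Simple types: τ ::= o | τ → τ. -/
inductive Ty : Type
  | o : Ty
  | arrow : Ty → Ty → Ty
deriving DecidableEq


/-- λ-terms with ports over a set `V` of typed variables: leaves are variables
or numbered ports, unary nodes are abstractions `λx`, binary nodes are
applications `@`. -/
inductive PTm (V : Type) : Type
  | port : ℕ → PTm V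
  | var : V → PTm V
  | lam : V → PTm V → PTm V
  | app : PTm V → PTm V → PTm V

/-- Whether the root of a term is a port. -/
def PTm.isPort {V : Type} : PTm V → Prop
  | PTm.port _ => True
  | _ => False

/-- Nodes of a term are addressed by lists of directions: `false` goes to the
(left or unique) child, `true` to the right child. `subtermAt t p` is the
subterm rooted at the node `p`, if `p` is a node of `t`. -/
def subtermAt {V : Type} : PTm V → List Bool → Option (PTm V)
  | t, [] => some t
  | PTm.lam _ M, false :: p => subtermAt M p
  | PTm.app M _, false :: p => subtermAt M p
  | PTm.app _ N, true :: p => subtermAt N p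
  | _, _ => none

/-- `PreLt p q`: node `p` strictly precedes node `q` in the depth-first
left-to-right (pre-order) traversal. -/
inductive PreLt : List Bool → List Bool → Prop
  | nil {q : List Bool} : q ≠ [] → PreLt [] q
  | cons {p q : List Bool} (a : Bool) : PreLt p q → PreLt (a :: p) (a :: q)
  | leftRight (p q : List Bool) : PreLt (false :: p) (true :: q)

/-- Number of free occurrences of the variable `x` (ports count for no
variable). -/
def freeCountP {V : Type} [DecidableEq V] (x : V) : PTm V → ℕ
  | PTm.port _ => 0
  | PTm.var y => if y = x then 1 else 0
  | PTm.lam y M => if y = x then 0 else freeCountP x M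
  | PTm.app M N => freeCountP x M + freeCountP x N

/-- A λ-term with ports is linear if every free variable occurs exactly once
(in particular at most once) and every abstraction `λx` binds exactly one
occurrence of `x`. -/
def LinearP {V : Type} [DecidableEq V] (t : PTm V) : Prop :=
  (∀ x : V, freeCountP x t ≤ 1) ∧
  (∀ (p : List Bool) (x : V) (N : PTm V),
    subtermAt t p = some (PTm.lam x N) → freeCountP x N = 1)

/-- A λ-term with ports is thin if every branching node (a node with at least
two non-port children, i.e. an application node with two non-port children)
is the application node of a redex. -/
def Thin {V : Type} (t : PTm V) : Prop :=
  ∀ (p : List Bool) (M N : PTm V),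
    subtermAt t p = some (PTm.app M N) → ¬ M.isPort → ¬ N.isPort →
    ∃ (x : V) (M' : PTm V), M = PTm.lam x M'

/-- `FreeOccAt x M r`: the node `r` of `M` is a free occurrence of the
variable `x` (no abstraction `λx` lies strictly above it in `M`). -/
def FreeOccAt {V : Type} (x : V) (M : PTm V) (r : List Bool) : Prop :=
  subtermAt M r = some (PTm.var x) ∧
  ∀ q : List Bool, q <+: r → q ≠ r →
    ∀ M' : PTm V, subtermAt M q ≠ some (PTm.lam x M')


lemma subtermAt_append {V : Type} (t : PTm V) (a b : List Bool) (M : PTm V)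
    (h : subtermAt t a = some M) : subtermAt t (a ++ b) = subtermAt M b := by
  induction a generalizing t with
  | nil => simp [subtermAt] at h; subst h; rfl
  | cons c a ih =>
    cases t <;> cases c <;> simp [subtermAt] at h ⊢ <;> exact ih _ h

lemma prelt_append (m p q : List Bool) (h : PreLt p q) :
    PreLt (m ++ p) (m ++ q) := by
  induction m with
  | nil => exact h
  | cons a m ih => exact PreLt.cons a ih

lemma prelt_asymm {p q : List Bool} (h : PreLt p q) : ¬ PreLt q p := by
  induction h with
  | nil h => intro h2; cases h2 with | nil h3 => exact h3 rfl
  | cons a h ih => intro h2; cases h2 with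
    | cons _ h3 => exact ih h3
  | leftRight p q => intro h2; cases h2

lemma freeOcc_lam_inv {V : Type} {x y : V} {M : PTm V} {r : List Bool}
    (h : FreeOccAt x (PTm.lam y M) (false :: r)) : y ≠ x ∧ FreeOccAt x M r := by
  obtain ⟨h1, h2⟩ := h
  constructor
  · intro hyx
    exact h2 [] (by simp) (by simp) M (by rw [hyx]; rfl)
  · refine ⟨h1, fun q hq hne M' => ?_⟩
    exact h2 (false :: q) (List.cons_prefix_cons.mpr ⟨rfl, hq⟩)
      (by simpa using hne) M'

lemma freeOcc_appL_inv {V : Type} {x : V} {A B : PTm V} {r : List Bool}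
    (h : FreeOccAt x (PTm.app A B) (false :: r)) : FreeOccAt x A r := by
  obtain ⟨h1, h2⟩ := h
  refine ⟨h1, fun q hq hne M' => ?_⟩
  exact h2 (false :: q) (List.cons_prefix_cons.mpr ⟨rfl, hq⟩) (by simpa using hne) M'

lemma freeOcc_appR_inv {V : Type} {x : V} {A B : PTm V} {r : List Bool}
    (h : FreeOccAt x (PTm.app A B) (true :: r)) : FreeOccAt x B r := by
  obtain ⟨h1, h2⟩ := h
  refine ⟨h1, fun q hq hne M' => ?_⟩
  exact h2 (true :: q) (List.cons_prefix_cons.mpr ⟨rfl, hq⟩) (by simpa using hne) M'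

lemma freeOcc_lam_intro {V : Type} {x y : V} {M : PTm V} {r : List Bool}
    (hyx : y ≠ x) (h : FreeOccAt x M r) : FreeOccAt x (PTm.lam y M) (false :: r) := by
  obtain ⟨h1, h2⟩ := h
  refine ⟨h1, fun q hq hne M' => ?_⟩
  match q, hq with
  | [], _ => intro hc; simp [subtermAt] at hc; exact hyx hc.1
  | b :: q, hq =>
    obtain ⟨hb, hq'⟩ := List.cons_prefix_cons.mp hq
    subst hb
    exact h2 q hq' (by simpa using hne) M'

lemma freeOcc_appL_intro {V : Type} {x : V} {A B : PTm V} {r : List Bool}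
    (h : FreeOccAt x A r) : FreeOccAt x (PTm.app A B) (false :: r) := by
  obtain ⟨h1, h2⟩ := h
  refine ⟨h1, fun q hq hne M' => ?_⟩
  match q, hq with
  | [], _ => intro hc; simp [subtermAt] at hc
  | b :: q, hq =>
    obtain ⟨hb, hq'⟩ := List.cons_prefix_cons.mp hq
    subst hb
    exact h2 q hq' (by simpa using hne) M'

lemma freeOcc_appR_intro {V : Type} {x : V} {A B : PTm V} {r : List Bool}
    (h : FreeOccAt x B r) : FreeOccAt x (PTm.app A B) (true :: r) := by
  obtain ⟨h1, h2⟩ := h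
  refine ⟨h1, fun q hq hne M' => ?_⟩
  match q, hq with
  | [], _ => intro hc; simp [subtermAt] at hc
  | b :: q, hq =>
    obtain ⟨hb, hq'⟩ := List.cons_prefix_cons.mp hq
    subst hb
    exact h2 q hq' (by simpa using hne) M'

lemma count_pos_of_freeOcc {V : Type} [DecidableEq V] {x : V} {M : PTm V} {r : List Bool}
    (h : FreeOccAt x M r) : 1 ≤ freeCountP x M := by
  induction M generalizing r with
  | port k => obtain ⟨h1, _⟩ := h; cases r <;> simp [subtermAt] at h1
  | var y =>
    obtain ⟨h1, _⟩ := h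
    cases r <;> simp [subtermAt] at h1
    simp [freeCountP, h1]
  | lam y M ih =>
    match r, h with
    | [], ⟨h1, _⟩ => simp [subtermAt] at h1
    | true :: r, ⟨h1, _⟩ => simp [subtermAt] at h1
    | false :: r, h =>
      obtain ⟨hyx, h'⟩ := freeOcc_lam_inv h
      have := ih h'
      simpa [freeCountP, hyx] using this
  | app A B ihA ihB =>
    match r, h with
    | [], ⟨h1, _⟩ => simp [subtermAt] at h1
    | false :: r, h =>
      have := ihA (freeOcc_appL_inv h)
      simp [freeCountP]; omega
    | true :: r, h =>
      have := ihB (freeOcc_appR_inv h)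
      simp [freeCountP]; omega

lemma exists_freeOcc {V : Type} [DecidableEq V] {x : V} {M : PTm V}
    (h : 1 ≤ freeCountP x M) : ∃ r, FreeOccAt x M r := by
  induction M with
  | port k => simp [freeCountP] at h
  | var y =>
    refine ⟨[], ⟨?_, ?_⟩⟩
    · simp [freeCountP] at h
      split at h
      · next hy => rw [hy]; rfl
      · omega
    · intro q hq hne M'
      have : q = [] := List.prefix_nil.mp hq
      exact absurd this hne
  | lam y M ih =>
    simp [freeCountP] at h
    split at h
    · omega
    · next hy =>
      obtain ⟨r, hr⟩ := ih h
      exact ⟨false :: r, freeOcc_lam_intro hy hr⟩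
  | app A B ihA ihB =>
    simp [freeCountP] at h
    rcases le_or_gt 1 (freeCountP x A) with hA | hA
    · obtain ⟨r, hr⟩ := ihA hA
      exact ⟨false :: r, freeOcc_appL_intro hr⟩
    · have hB : 1 ≤ freeCountP x B := by omega
      obtain ⟨r, hr⟩ := ihB hB
      exact ⟨true :: r, freeOcc_appR_intro hr⟩

def psize {V : Type} : PTm V → ℕ
  | .port _ => 1
  | .var _ => 1
  | .lam _ M => psize M + 1
  | .app A B => psize A + psize B + 1

lemma main_greatest {V : Type} [DecidableEq V] (t : PTm V) (hlin : LinearP t)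
    (hthin : Thin t) :
    ∀ (k : ℕ) (M : PTm V), psize M ≤ k → ∀ (a : List Bool), subtermAt t a = some M →
    ∀ (x : V), freeCountP x M = 1 → ∀ (r : List Bool), FreeOccAt x M r →
    ∀ (p : List Bool) (u : PTm V), subtermAt M p = some u → ¬ u.isPort → p ≠ r →
    PreLt p r := by
  intro k
  induction k with
  | zero => intro M hsz; cases M <;> simp [psize] at hsz
  | succ k ih =>
    intro M hsz a ha x hcnt r hr p u hu hnp hne
    cases M with
    | port j => simp [freeCountP] at hcnt
    | var y =>
      obtain ⟨h1, _⟩ := hr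
      cases r with
      | nil =>
        cases p with
        | nil => exact absurd rfl hne
        | cons c p => cases c <;> simp [subtermAt] at hu
      | cons c r => cases c <;> simp [subtermAt] at h1
    | lam y M =>
      match r, hr with
      | [], ⟨h1, _⟩ => simp [subtermAt] at h1
      | true :: r, ⟨h1, _⟩ => simp [subtermAt] at h1
      | false :: r, hr =>
        obtain ⟨hyx, hr'⟩ := freeOcc_lam_inv hr
        have hcnt' : freeCountP x M = 1 := by simpa [freeCountP, hyx] using hcnt
        match p, hu with
        | [], hu => exact PreLt.nil (by simp)
        | true :: p, hu => simp [subtermAt] at hu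
        | false :: p, hu =>
          have ha' : subtermAt t (a ++ [false]) = some M := by
            rw [subtermAt_append t a [false] _ ha]; simp [subtermAt]
          exact PreLt.cons false (ih M (by simp [psize] at hsz; omega) (a ++ [false])
            ha' x hcnt' r hr' p u hu hnp (by simpa using hne))
    | app A B =>
      have hcAB : freeCountP x A + freeCountP x B = 1 := by
        simpa [freeCountP] using hcnt
      match r, hr with
      | [], ⟨h1, _⟩ => simp [subtermAt] at h1
      | true :: r, hr =>
        have hrB := freeOcc_appR_inv hr
        have hBpos := count_pos_of_freeOcc hrB
        have hcB : freeCountP x B = 1 := by omega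
        match p, hu with
        | [], hu => exact PreLt.nil (by simp)
        | false :: p, hu => exact PreLt.leftRight p r
        | true :: p, hu =>
          have ha' : subtermAt t (a ++ [true]) = some B := by
            rw [subtermAt_append t a [true] _ ha]; simp [subtermAt]
          exact PreLt.cons true (ih B (by simp [psize] at hsz; omega) _ ha' x hcB
            r hrB p u hu hnp (by simpa using hne))
      | false :: r, hr =>
        have hrA := freeOcc_appL_inv hr
        have hApos := count_pos_of_freeOcc hrA
        have hcA : freeCountP x A = 1 := by omega
        match p, hu with
        | [], hu => exact PreLt.nil (by simp)
        | false :: p, hu =>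
          have ha' : subtermAt t (a ++ [false]) = some A := by
            rw [subtermAt_append t a [false] _ ha]; simp [subtermAt]
          exact PreLt.cons false (ih A (by simp [psize] at hsz; omega) _ ha' x hcA
            r hrA p u hu hnp (by simpa using hne))
        | true :: p, hu =>
          exfalso
          have hu' : subtermAt B p = some u := hu
          have hBnp : ¬ B.isPort := by
            cases p with
            | nil =>
              simp [subtermAt] at hu'; subst hu'; exact hnp
            | cons c p =>
              cases B with
              | port j => cases c <;> simp [subtermAt] at hu'
              | var z => simp [PTm.isPort]
              | lam z M' => simp [PTm.isPort]
              | app A' B' => simp [PTm.isPort]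
          have hAnp : ¬ A.isPort := by
            cases A <;> simp [PTm.isPort] <;> simp [freeCountP] at hcA
          obtain ⟨y, A', hAeq⟩ := hthin a A B ha hAnp hBnp
          subst hAeq
          match r, hrA with
          | [], ⟨h1, _⟩ => simp [subtermAt] at h1
          | true :: r, ⟨h1, _⟩ => simp [subtermAt] at h1
          | false :: r'', hrA' =>
            obtain ⟨hyx, hrA''⟩ := freeOcc_lam_inv hrA'
            have hcx : freeCountP x A' = 1 := by simpa [freeCountP, hyx] using hcA
            have ha2 : subtermAt t (a ++ [false, false]) = some A' := by
              rw [subtermAt_append t a [false, false] _ ha]; simp [subtermAt]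
            have hcy : freeCountP y A' = 1 :=
              hlin.2 (a ++ [false]) y A'
                (by rw [subtermAt_append t a [false] _ ha]; simp [subtermAt])
            obtain ⟨s, hsf⟩ := exists_freeOcc (x := y) (M := A') (by omega)
            have hsr : s ≠ r'' := by
              intro hh; subst hh
              have h2 := hrA''.1.symm.trans hsf.1
              simp at h2
              exact hyx h2.symm
            have hsize : psize A' ≤ k := by simp [psize] at hsz; omega
            have H1 := ih A' hsize _ ha2 x hcx r'' hrA'' s (PTm.var y) hsf.1
              (by simp [PTm.isPort]) hsr
            have H2 := ih A' hsize _ ha2 y hcy s hsf r'' (PTm.var x) hrA''.1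
              (by simp [PTm.isPort]) (fun h => hsr h.symm)
            exact prelt_asymm H1 H2

/-- In a linear thin λ-term with ports, if `m` is the abstraction node of a
redex, binding the variable occurrence at node `n`, then every non-port node
of the subtree rooted at `m` other than `n` strictly precedes `n` in
pre-order: `n` is the greatest non-port node of that subtree. -/
theorem redex_variable_is_preorder_greatest {V : Type} [DecidableEq V]
    (t : PTm V) (hlin : LinearP t) (hthin : Thin t)
    (q : List Bool) (x : V) (M N : PTm V)
    (hred : subtermAt t q = some (PTm.app (PTm.lam x M) N))
    (m : List Bool) (hm : m = q ++ [false])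
    (r : List Bool) (hocc : FreeOccAt x M r)
    (n : List Bool) (hn : n = m ++ false :: r)
    (p : List Bool) (hp : m <+: p)
    (u : PTm V) (hu : subtermAt t p = some u) (hnp : ¬ u.isPort)
    (hne : p ≠ n) :
    PreLt p n := by
  subst hm hn
  obtain ⟨p', rfl⟩ := hp
  have hmM : subtermAt t (q ++ [false]) = some (PTm.lam x M) := by
    rw [subtermAt_append t q [false] _ hred]; simp [subtermAt]
  have hcnt : freeCountP x M = 1 := hlin.2 (q ++ [false]) x M hmM
  have hu' : subtermAt (PTm.lam x M) p' = some u := by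
    rw [← subtermAt_append t (q ++ [false]) p' _ hmM]; exact hu
  refine prelt_append (q ++ [false]) p' (false :: r) ?_
  match p', hu' with
  | [], _ => exact PreLt.nil (by simp)
  | true :: p'', h => simp [subtermAt] at h
  | false :: p'', h =>
    have hmm : subtermAt t ((q ++ [false]) ++ [false]) = some M := by
      rw [subtermAt_append t (q ++ [false]) [false] _ hmM]; simp [subtermAt]
    refine PreLt.cons false (main_greatest t hlin hthin (psize M) M le_rfl _ hmm
      x hcnt r hocc p'' u h hnp ?_)
    intro hh
    exact hne (by rw [hh])
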